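/- arXiv:2508.13427 — 2 statements merged into one kernel-verified Lean document; each statement's English description precedes it below -/
import Mathlib

section
/- Let $\mu$ be a probability measure on $\Omega$, $s : \Omega \to [0,\infty)$ measurable with $\int s\, d\mu = 1$, and $f : \Omega \to \mathbb{R}$ bounded measurable. Let $L = \{s < 1\}$, $U = \{s > 1\}$, and let $b = \inf_{y \in L} f(y)$. Suppose $f \leq b$ on $U$, and suppose there exists a measurable set $A \subseteq L \cup U$ and $m > 0$ such that $\int_A |1 - s|\, d\mu > 0$ and $|f(y) - b| \geq m$ for all $y \in A$. Then $\int s f\, d\mu \leq \int f\, d\mu - m \int_A |1-s|\, d\mu$, and in particular $\int s f\, d\mu < \int f\, d\mu$. -/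
open MeasureTheory

/-- Strict one-step time-varying confounding bias inequality: with
`b = inf f(L)` (infimum over the downweighted adaptations `L = {s < 1}`),
`f ≤ b` on the upweighted adaptations `U = {s > 1}`, and a set `A ⊆ L ∪ U`
on which `|1 - s|` has positive integral and `|f - b| ≥ m > 0`, the
reweighted expectation is at most `∫ f - m ∫_A |1-s|`, hence strictly
below `∫ f`. -/
theorem strict_one_step_bias
    {Ω : Type*} [MeasurableSpace Ω] (μ : Measure Ω) [IsProbabilityMeasure μ]
    (s f : Ω → ℝ)
    (hs_meas : Measurable s) (hf_meas : Measurable f)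
    (hs_nonneg : ∀ y, 0 ≤ s y)
    (hs_int : Integrable s μ)
    (hs_mean : ∫ y, s y ∂μ = 1)
    (C : ℝ) (hf_bdd : ∀ y, |f y| ≤ C)
    (b : ℝ) (hb : b = sInf (f '' {y | s y < 1}))
    (hU : ∀ y, 1 < s y → f y ≤ b)
    (A : Set Ω) (hA_meas : MeasurableSet A)
    (hA_sub : A ⊆ {y | s y < 1} ∪ {y | 1 < s y})
    (m : ℝ) (hm : 0 < m)
    (hA_pos : 0 < ∫ y in A, |1 - s y| ∂μ)
    (hA_sep : ∀ y ∈ A, m ≤ |f y - b|) :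
    (∫ y, s y * f y ∂μ ≤ (∫ y, f y ∂μ) - m * ∫ y in A, |1 - s y| ∂μ) ∧
      ∫ y, s y * f y ∂μ < ∫ y, f y ∂μ := by
  -- basic integrability facts
  have hInt_f : Integrable f μ :=
    (integrable_const C).mono' hf_meas.aestronglyMeasurable
      (ae_of_all _ fun y => by simpa using hf_bdd y)
  have hInt_sf : Integrable (fun y => s y * f y) μ := by
    refine (hs_int.const_mul C).mono'
      ((hs_meas.mul hf_meas).aestronglyMeasurable) (ae_of_all _ fun y => ?_)
    have : |s y * f y| = s y * |f y| := by
      rw [abs_mul, abs_of_nonneg (hs_nonneg y)]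
    rw [Real.norm_eq_abs, this]
    calc s y * |f y| ≤ s y * C := by
          exact mul_le_mul_of_nonneg_left (hf_bdd y) (hs_nonneg y)
      _ = C * s y := mul_comm _ _
  set g : Ω → ℝ := fun y => (s y - 1) * (f y - b) with hg_def
  have hInt_g : Integrable g μ := by
    have : g = fun y => (s y * f y - b * s y) - (f y - b) := by
      funext y; simp only [hg_def]; ring
    rw [this]
    exact ((hInt_sf.sub (hs_int.const_mul b)).sub (hInt_f.sub (integrable_const b)))
  -- b is a lower bound for f on L
  have hbdd : BddBelow (f '' {y | s y < 1}) := by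
    refine ⟨-C, ?_⟩
    rintro x ⟨y, _, rfl⟩
    exact neg_le_of_abs_le (hf_bdd y)
  have hL : ∀ y, s y < 1 → b ≤ f y := fun y hy => by
    rw [hb]; exact csInf_le hbdd ⟨y, hy, rfl⟩
  -- g is nonpositive everywhere
  have hg_nonpos : ∀ y, g y ≤ 0 := by
    intro y
    rcases lt_trichotomy (s y) 1 with h | h | h
    · exact mul_nonpos_of_nonpos_of_nonneg (by linarith) (by linarith [hL y h])
    · simp [hg_def, h]
    · exact mul_nonpos_of_nonneg_of_nonpos (by linarith) (by linarith [hU y h])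
  -- on A, g ≤ -m * |1 - s|
  have hg_A : ∀ y ∈ A, g y ≤ -m * |1 - s y| := by
    intro y hy
    rcases hA_sub hy with h | h
    · have h1 : s y < 1 := h
      have hfb : b ≤ f y := hL y h1
      have hsep : m ≤ f y - b := by
        have := hA_sep y hy
        rwa [abs_of_nonneg (by linarith)] at this
      have habs : |1 - s y| = 1 - s y := abs_of_nonneg (by linarith)
      rw [habs]
      show (s y - 1) * (f y - b) ≤ -m * (1 - s y)
      nlinarith [mul_le_mul_of_nonneg_left hsep (show (0:ℝ) ≤ 1 - s y by linarith)]
    · have h1 : (1:ℝ) < s y := h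
      have hfb : f y ≤ b := hU y h1
      have hsep : m ≤ b - f y := by
        have := hA_sep y hy
        rwa [abs_of_nonpos (by linarith), neg_sub] at this
      have habs : |1 - s y| = s y - 1 := by
        rw [abs_of_nonpos (by linarith)]; ring
      rw [habs]
      show (s y - 1) * (f y - b) ≤ -m * (s y - 1)
      nlinarith [mul_le_mul_of_nonneg_left (show f y - b ≤ -m by linarith) (show (0:ℝ) ≤ s y - 1 by linarith)]
  -- ∫ g = ∫ s f - ∫ f
  have key : ∫ y, g y ∂μ = ∫ y, s y * f y ∂μ - ∫ y, f y ∂μ := by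
    have h1 : g = fun y => (s y * f y - b * s y) - (f y - b) := by
      funext y; simp only [hg_def]; ring
    have h2 : Integrable (fun y => s y * f y - b * s y) μ :=
      hInt_sf.sub (hs_int.const_mul b)
    have h3 : Integrable (fun y => f y - b) μ := hInt_f.sub (integrable_const b)
    rw [h1, integral_sub h2 h3, integral_sub hInt_sf (hs_int.const_mul b),
      integral_sub hInt_f (integrable_const b),
      integral_const_mul, hs_mean]
    simp
  -- integrability of |1 - s|
  have hInt_abs : Integrable (fun y => |1 - s y|) μ :=
    ((integrable_const (1:ℝ)).sub hs_int).abs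
  -- ∫ g ≤ -m * ∫_A |1-s|
  have hbound : ∫ y, g y ∂μ ≤ -m * ∫ y in A, |1 - s y| ∂μ := by
    have hsplit : ∫ y, g y ∂μ =
        (∫ y in A, g y ∂μ) + ∫ y in Aᶜ, g y ∂μ :=
      (integral_add_compl hA_meas hInt_g).symm
    have h2 : ∫ y in Aᶜ, g y ∂μ ≤ 0 :=
      setIntegral_nonpos hA_meas.compl (fun y _ => hg_nonpos y)
    have h1 : ∫ y in A, g y ∂μ ≤ ∫ y in A, -m * |1 - s y| ∂μ := by
      refine setIntegral_mono_on (hInt_g.integrableOn)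
        ((hInt_abs.const_mul (-m)).integrableOn) hA_meas hg_A
    have h3 : ∫ y in A, -m * |1 - s y| ∂μ = -m * ∫ y in A, |1 - s y| ∂μ :=
      integral_const_mul _ _
    linarith [hsplit, h1, h2, h3.le, h3.ge]
  have main : ∫ y, s y * f y ∂μ ≤ (∫ y, f y ∂μ) - m * ∫ y in A, |1 - s y| ∂μ := by
    rw [key] at hbound; linarith
  refine ⟨main, ?_⟩
  have : 0 < m * ∫ y in A, |1 - s y| ∂μ := mul_pos hm hA_pos
  linarith
end

section
/- Let $X$ be a real-valued integrable random variable and let $s, f : \mathbb{R} \to \mathbb{R}$ be bounded measurable functions with $s$ nonincreasing, $f$ nondecreasing, and $\mathbb{E}[s(X)] = 1$. If additionally $\mathrm{Var}$-type nondegeneracy holds, namely $s(X)$ and $f(X)$ are not almost surely constant and there exist reals $u < v$ in the support of $X$ with $s(u) > s(v)$ and $f(u) < f(v)$ each holding on sets of positive probability, then $\mathbb{E}[s(X) f(X)] < \mathbb{E}[f(X)]$. -/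
open MeasureTheory

/-!
With `X'` an independent copy of `X`, Chebyshev's identity reads
`2 (𝔼[s(X) f(X)] - 𝔼[s(X)] 𝔼[f(X)]) = 𝔼[(s(X) - s(X')) (f(X) - f(X'))]`.
Since `s` and `f` vary in opposite directions the integrand is nonpositive, and it is strictly
negative on the event `{X ≤ u} × {v ≤ X'}`, which has probability `ℙ(X ≤ u) ℙ(v ≤ X) > 0`.
Finally `𝔼[s(X)] = 1`.
-/

namespace MeasureTheory

variable {Ω : Type*} [MeasurableSpace Ω] {μ : Measure Ω} [IsProbabilityMeasure μ] {S F : Ω → ℝ}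

lemma integrable_sub_mul_sub_prod (hS : Integrable S μ) (hF : Integrable F μ)
    (hSF : Integrable (fun ω ↦ S ω * F ω) μ) :
    Integrable (fun p : Ω × Ω ↦ (S p.1 - S p.2) * (F p.1 - F p.2)) (μ.prod μ) := by
  refine (((hSF.comp_fst μ).sub (hS.mul_prod hF)).sub
    ((hF.mul_prod hS).sub (hSF.comp_snd μ))).congr (ae_of_all _ fun p ↦ ?_)
  simp only [Pi.sub_apply]
  ring

lemma integral_sub_mul_sub_prod (hS : Integrable S μ) (hF : Integrable F μ)
    (hSF : Integrable (fun ω ↦ S ω * F ω) μ) :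
    ∫ p, (S p.1 - S p.2) * (F p.1 - F p.2) ∂μ.prod μ =
      2 * (∫ ω, S ω * F ω ∂μ - (∫ ω, S ω ∂μ) * ∫ ω, F ω ∂μ) := by
  have h₁ : Integrable (fun p : Ω × Ω ↦ S p.1 * F p.1 - S p.1 * F p.2) (μ.prod μ) :=
    (hSF.comp_fst μ).sub (hS.mul_prod hF)
  have h₂ : Integrable (fun p : Ω × Ω ↦ F p.1 * S p.2 - S p.2 * F p.2) (μ.prod μ) :=
    (hF.mul_prod hS).sub (hSF.comp_snd μ)
  calc ∫ p, (S p.1 - S p.2) * (F p.1 - F p.2) ∂μ.prod μ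
      = ∫ p, (S p.1 * F p.1 - S p.1 * F p.2) - (F p.1 * S p.2 - S p.2 * F p.2) ∂μ.prod μ := by
        congr 1; funext p; ring
    _ = 2 * (∫ ω, S ω * F ω ∂μ - (∫ ω, S ω ∂μ) * ∫ ω, F ω ∂μ) := by
      rw [integral_sub h₁ h₂, integral_sub (hSF.comp_fst μ) (hS.mul_prod hF),
        integral_sub (hF.mul_prod hS) (hSF.comp_snd μ), integral_fun_fst (fun ω ↦ S ω * F ω),
        integral_fun_snd (fun ω ↦ S ω * F ω), integral_prod_mul, integral_prod_mul]
      simp only [probReal_univ, one_smul]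
      ring

theorem Antivary.integral_mul_lt_integral_mul_integral (h : Antivary S F)
    (hS : Integrable S μ) (hF : Integrable F μ) (hSF : Integrable (fun ω ↦ S ω * F ω) μ)
    {A B : Set Ω} (hA : 0 < μ A) (hB : 0 < μ B)
    (hAB : ∀ ω ∈ A, ∀ ω' ∈ B, (S ω - S ω') * (F ω - F ω') < 0) :
    ∫ ω, S ω * F ω ∂μ < (∫ ω, S ω ∂μ) * ∫ ω, F ω ∂μ := by
  set D : Ω × Ω → ℝ := fun p ↦ (S p.1 - S p.2) * (F p.1 - F p.2)
  have hD_nonpos : ∀ p, D p ≤ 0 := fun p ↦ h.sub_mul_sub_nonpos p.2 p.1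
  have hsupp : A ×ˢ B ⊆ Function.support (-D) := fun p hp ↦
    neg_ne_zero.2 (hAB p.1 hp.1 p.2 hp.2).ne
  have hpos : 0 < ∫ p, -D p ∂μ.prod μ := by
    rw [integral_pos_iff_support_of_nonneg_ae (ae_of_all _ fun p ↦ neg_nonneg.2 (hD_nonpos p))
      (integrable_sub_mul_sub_prod hS hF hSF).neg]
    exact (ENNReal.mul_pos hA.ne' hB.ne').trans_le ((Measure.prod_prod A B).symm.trans_le
      (measure_mono hsupp))
  rw [integral_neg, integral_sub_mul_sub_prod hS hF hSF] at hpos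
  linarith

end MeasureTheory

theorem strict_chebyshev_bias_general
    {Ω : Type*} [MeasurableSpace Ω] (μ : Measure Ω) [IsProbabilityMeasure μ]
    (X : Ω → ℝ) (hX_meas : Measurable X)
    (s f : ℝ → ℝ)
    (hs_meas : Measurable s) (hf_meas : Measurable f)
    (Cs : ℝ) (hs_bdd : ∀ y, |s y| ≤ Cs)
    (Cf : ℝ) (hf_bdd : ∀ y, |f y| ≤ Cf)
    (hs_anti : Antitone s) (hf_mono : Monotone f)
    (hs_mean : ∫ ω, s (X ω) ∂μ = 1)
    (u v : ℝ)
    (hs_strict : s v < s u) (hf_strict : f u < f v)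
    (hu_pos : 0 < μ {ω | X ω ≤ u}) (hv_pos : 0 < μ {ω | v ≤ X ω}) :
    ∫ ω, s (X ω) * f (X ω) ∂μ < ∫ ω, f (X ω) ∂μ := by
  have hsX_meas := (hs_meas.comp hX_meas).aestronglyMeasurable (μ := μ)
  have hsX : Integrable (fun ω ↦ s (X ω)) μ := .of_bound hsX_meas Cs (ae_of_all _ fun _ ↦ hs_bdd _)
  have hfX : Integrable (fun ω ↦ f (X ω)) μ :=
    .of_bound (hf_meas.comp hX_meas).aestronglyMeasurable Cf (ae_of_all _ fun _ ↦ hf_bdd _)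
  have hsfX : Integrable (fun ω ↦ s (X ω) * f (X ω)) μ :=
    hfX.bdd_mul hsX_meas (ae_of_all _ fun _ ↦ hs_bdd _)
  have hsep : ∀ ω ∈ {ω | X ω ≤ u}, ∀ ω' ∈ {ω | v ≤ X ω},
      (s (X ω) - s (X ω')) * (f (X ω) - f (X ω')) < 0 := fun ω hω ω' hω' ↦
    mul_neg_of_pos_of_neg (sub_pos.2 ((hs_anti hω').trans_lt (hs_strict.trans_le (hs_anti hω))))
      (sub_neg.2 ((hf_mono hω).trans_lt (hf_strict.trans_le (hf_mono hω'))))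
  simpa [hs_mean] using
    ((hs_anti.antivary hf_mono).comp_right X).integral_mul_lt_integral_mul_integral
      hsX hfX hsfX hu_pos hv_pos hsep

/-- Strict Chebyshev correlation inequality: if `s` is a bounded measurable
nonincreasing weight with `E[s(X)] = 1`, `f` is bounded measurable
nondecreasing, and there exist `u < v` with `s u > s v`, `f u < f v`, and
`X ≤ u`, `X ≥ v` each occurring with positive probability, then
`E[s(X) f(X)] < E[f(X)]`. -/
theorem strict_chebyshev_bias
    {Ω : Type*} [MeasurableSpace Ω] (μ : Measure Ω) [IsProbabilityMeasure μ]
    (X : Ω → ℝ) (hX_meas : Measurable X) (hX_int : Integrable X μ)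
    (s f : ℝ → ℝ)
    (hs_meas : Measurable s) (hf_meas : Measurable f)
    (Cs : ℝ) (hs_bdd : ∀ y, |s y| ≤ Cs)
    (Cf : ℝ) (hf_bdd : ∀ y, |f y| ≤ Cf)
    (hs_anti : Antitone s) (hf_mono : Monotone f)
    (hs_mean : ∫ ω, s (X ω) ∂μ = 1)
    (u v : ℝ) (huv : u < v)
    (hs_strict : s v < s u) (hf_strict : f u < f v)
    (hu_pos : 0 < μ {ω | X ω ≤ u}) (hv_pos : 0 < μ {ω | v ≤ X ω}) :
    ∫ ω, s (X ω) * f (X ω) ∂μ < ∫ ω, f (X ω) ∂μ :=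
  strict_chebyshev_bias_general μ X hX_meas s f hs_meas hf_meas Cs hs_bdd Cf hf_bdd hs_anti hf_mono
    hs_mean u v hs_strict hf_strict hu_pos hv_pos
end
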